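/- arXiv:cond-mat/0512489 — 4 statements merged into one kernel-verified Lean document; each statement's English description precedes it below -/
import Mathlib

section
/- For every L ≥ 1 and all u, v ∈ ℂ, the row-to-row transfer matrices of the rational su(n) model commute: t(u) t(v) = t(v) t(u) as operators on V^{⊗L}. -/
/-!
The product `t(u) t(v)` is the transfer matrix of the two-row weight `R₁₃(u) R₂₃(v)`, whose
auxiliary space is `V ⊗ V`. For `R(v) = v + P` the Yang–Baxter equation
`R₁₂(u - v) R₁₃(u) R₂₃(v) = R₂₃(v) R₁₃(u) R₁₂(u - v)` reduces to the braid relations between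
transpositions. When `(u - v)² ≠ 1`, `R(u - v)` is invertible (its inverse is a multiple of
`(u - v) - P`), and conjugating by it in the auxiliary space leaves the transfer matrix unchanged,
by cyclicity of the trace. After swapping the two auxiliary factors, the transfer matrix of
`R₂₃(v) R₁₃(u)` is `t(v) t(u)`. Both sides are continuous in `u`, so the identity extends to the
two exceptional values.
-/

open Complex

/-- The rational `su(n)` R-matrix `R(v) = v·id + P` on `V ⊗ V`, `V = ℂ^n`, in components:
`R(v)^{a′b′}_{ab} = v δ_{a a′} δ_{b b′} + δ_{a′ b} δ_{a b′}`. Row `(a′,b′)`, column `(a,b)`. -/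
noncomputable def Rmat (n : ℕ) (v : ℂ) :
    Matrix (Fin n × Fin n) (Fin n × Fin n) ℂ := fun p q =>
  (if p.1 = q.1 then v else 0) * (if p.2 = q.2 then 1 else 0) +
    (if p.1 = q.2 then 1 else 0) * (if p.2 = q.1 then 1 else 0)

/-- Cyclic successor `j ↦ j + 1 (mod L)` on `Fin L`. -/
def cyc {L : ℕ} (j : Fin L) : Fin L := ⟨(j.1 + 1) % L, Nat.mod_lt _ j.pos⟩

/-- The row-to-row transfer matrix of the rational `su(n)` model on `V^{⊗L}`:
`t(v)^{α₁…α_L}_{β₁…β_L} = Σ_ν ∏_j R(v)^{ν_{j+1} α_j}_{ν_j β_j}`, with `ν_{L+1} = ν₁`. -/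
noncomputable def transferMatrix (n L : ℕ) (v : ℂ) :
    Matrix (Fin L → Fin n) (Fin L → Fin n) ℂ := fun α β =>
  ∑ ν : Fin L → Fin n, ∏ j : Fin L, Rmat n v (ν (cyc j), α j) (ν j, β j)

open Matrix
open scoped Kronecker

lemma cyc_eq_finRotate {L : ℕ} (j : Fin L) : cyc j = finRotate L j := by
  cases L with
  | zero => exact j.elim0
  | succ L =>
    rw [finRotate_apply]
    ext
    simp [cyc, Fin.val_add]

section Transfer

variable {R ι W W' W₁ W₂ : Type*} [CommRing R] [Fintype W] [Fintype W₁] [Fintype W₂] (L : ℕ)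

/-- `M` is a vertex weight on `auxiliary ⊗ physical`; the trace runs over the auxiliary
space `W`. -/
def transfer (M : Matrix (W × ι) (W × ι) R) : Matrix (Fin L → ι) (Fin L → ι) R :=
  fun α β => ∑ ν : Fin L → W, ∏ j, M (ν (cyc j), α j) (ν j, β j)

theorem continuous_transfer {X : Type*} [TopologicalSpace X] [TopologicalSpace R]
    [IsTopologicalRing R] {M : X → Matrix (W × ι) (W × ι) R} (hM : Continuous M) :
    Continuous fun x => transfer L (M x) :=
  continuous_pi fun α => continuous_pi fun β => by
    simp only [transfer]
    fun_prop

theorem transfer_submatrix_prodCongr [Fintype W'] (e : W ≃ W') (M : Matrix (W' × ι) (W' × ι) R) :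
    transfer L (M.submatrix (e.prodCongr (.refl ι)) (e.prodCongr (.refl ι))) = transfer L M := by
  ext α β
  exact Fintype.sum_equiv ((Equiv.refl (Fin L)).arrowCongr e) _ _ fun ν => by simp

variable [Fintype ι]

/-- The weight of two stacked rows, `M` on top of `N`, with auxiliary space `W₁ × W₂`. -/
def stack (M : Matrix (W₁ × ι) (W₁ × ι) R) (N : Matrix (W₂ × ι) (W₂ × ι) R) :
    Matrix ((W₁ × W₂) × ι) ((W₁ × W₂) × ι) R :=
  fun p q => ∑ c, M (p.1.1, p.2) (q.1.1, c) * N (p.1.2, c) (q.1.2, q.2)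

theorem transfer_mul (M : Matrix (W₁ × ι) (W₁ × ι) R) (N : Matrix (W₂ × ι) (W₂ × ι) R) :
    transfer L M * transfer L N = transfer L (stack M N) := by
  ext α β
  simp only [transfer, stack, mul_apply, Finset.sum_mul_sum, ← Finset.prod_mul_distrib]
  calc
    _ = ∑ ν : Fin L → W₁, ∑ μ : Fin L → W₂, ∑ γ : Fin L → ι,
          ∏ j, M (ν (cyc j), α j) (ν j, γ j) * N (μ (cyc j), γ j) (μ j, β j) := by
      rw [Finset.sum_comm]
      exact Finset.sum_congr rfl fun ν _ => Finset.sum_comm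
    _ = ∑ ν : Fin L → W₁, ∑ μ : Fin L → W₂,
          ∏ j, ∑ c, M (ν (cyc j), α j) (ν j, c) * N (μ (cyc j), c) (μ j, β j) := by
      simp only [Fintype.prod_sum]
    _ = _ := by
      rw [← Fintype.sum_prod_type', ← (Equiv.arrowProdEquivProdArrow _ _ _).symm.sum_comp]
      rfl

variable [DecidableEq ι]

lemma kronecker_one_mul_apply (S : Matrix W W R) (M : Matrix (W × ι) (W × ι) R)
    (x y : W) (a b : ι) :
    (S ⊗ₖ (1 : Matrix ι ι R) * M) (x, a) (y, b) = ∑ w, S x w * M (w, a) (y, b) := by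
  simp [mul_apply, Fintype.sum_prod_type, one_apply, mul_ite]

lemma mul_kronecker_one_apply (S : Matrix W W R) (M : Matrix (W × ι) (W × ι) R)
    (x y : W) (a b : ι) :
    (M * S ⊗ₖ (1 : Matrix ι ι R)) (x, a) (y, b) = ∑ w, M (x, a) (w, b) * S w y := by
  simp [mul_apply, Fintype.sum_prod_type, one_apply]

/-- Cyclicity of the trace: going once around the chain, `S` passes from the left of `M` to
its right. -/
theorem transfer_kronecker_one_mul_comm (S : Matrix W W R) (M : Matrix (W × ι) (W × ι) R) :
    transfer L (S ⊗ₖ (1 : Matrix ι ι R) * M) = transfer L (M * S ⊗ₖ (1 : Matrix ι ι R)) := by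
  ext α β
  simp only [transfer, kronecker_one_mul_apply, mul_kronecker_one_apply, Fintype.prod_sum,
    Finset.prod_mul_distrib, cyc_eq_finRotate]
  conv_rhs => rw [Finset.sum_comm]
  refine Fintype.sum_congr _ _ fun ν => ?_
  refine Fintype.sum_equiv ((finRotate L).arrowCongr (.refl W)) _ _ fun μ => ?_
  simp only [Equiv.arrowCongr_apply, Equiv.refl_apply, Function.comp_apply, Equiv.symm_apply_apply]
  rw [mul_comm, ← Equiv.prod_comp (finRotate L) fun j => S (ν j) (μ ((finRotate L).symm j))]
  simp only [Equiv.symm_apply_apply]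

variable [DecidableEq W]

theorem transfer_eq_of_kronecker_one_mul_eq {S : Matrix W W R} (hS : IsUnit S)
    {X Y : Matrix (W × ι) (W × ι) R}
    (h : S ⊗ₖ (1 : Matrix ι ι R) * X = Y * S ⊗ₖ (1 : Matrix ι ι R)) :
    transfer L X = transfer L Y := by
  obtain ⟨⟨S, S', hSS', hS'S⟩, rfl⟩ := hS
  have kronecker_one_mul_eq_one {A B : Matrix W W R} (hAB : A * B = 1) :
      A ⊗ₖ (1 : Matrix ι ι R) * B ⊗ₖ (1 : Matrix ι ι R) = 1 := by
    rw [← mul_kronecker_mul, hAB, one_mul, one_kronecker_one]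
  calc transfer L X
      = transfer L (X * (S' ⊗ₖ 1 * S ⊗ₖ 1)) := by rw [kronecker_one_mul_eq_one hS'S, mul_one]
    _ = transfer L (S ⊗ₖ 1 * (X * S' ⊗ₖ 1)) := by rw [← mul_assoc, transfer_kronecker_one_mul_comm]
    _ = transfer L (Y * (S ⊗ₖ 1 * S' ⊗ₖ 1)) := by rw [← mul_assoc, h, mul_assoc]
    _ = transfer L Y := by rw [kronecker_one_mul_eq_one hSS', mul_one]

theorem transfer_commute_of_intertwine [DecidableEq W₁] [DecidableEq W₂]
    {S : Matrix (W₁ × W₂) (W₁ × W₂) R} (hS : IsUnit S)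
    {M : Matrix (W₁ × ι) (W₁ × ι) R} {N : Matrix (W₂ × ι) (W₂ × ι) R}
    (h : S ⊗ₖ (1 : Matrix ι ι R) * stack M N =
      (stack N M).submatrix ((Equiv.prodComm W₁ W₂).prodCongr (.refl ι))
        ((Equiv.prodComm W₁ W₂).prodCongr (.refl ι)) * S ⊗ₖ (1 : Matrix ι ι R)) :
    Commute (transfer L M) (transfer L N) := by
  rw [Commute, SemiconjBy, transfer_mul, transfer_mul, transfer_eq_of_kronecker_one_mul_eq L hS h,
    transfer_submatrix_prodCongr]

end Transfer

section YangR

variable {R ι : Type*} [CommRing R] [DecidableEq ι]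

variable (ι) in
def yangR (v : R) : Matrix (ι × ι) (ι × ι) R :=
  v • 1 + Equiv.Perm.permMatrix R (Equiv.prodComm ι ι)

variable (ι) in
def swap12 : Equiv.Perm ((ι × ι) × ι) := (Equiv.prodComm ι ι).prodCongr (.refl ι)

variable (ι) in
def swap13 : Equiv.Perm ((ι × ι) × ι) :=
  ⟨fun p => ((p.2, p.1.2), p.1.1), fun p => ((p.2, p.1.2), p.1.1), fun _ => rfl, fun _ => rfl⟩

variable (ι) in
def swap23 : Equiv.Perm ((ι × ι) × ι) :=
  ⟨fun p => ((p.1.1, p.2), p.1.2), fun p => ((p.1.1, p.2), p.1.2), fun _ => rfl, fun _ => rfl⟩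

/-- `M₁₃` on `(ι × ι) × ι`, whose first two factors are auxiliary and the last physical;
`lift23` is `M₂₃`. -/
def lift13 (M : Matrix (ι × ι) (ι × ι) R) : Matrix ((ι × ι) × ι) ((ι × ι) × ι) R :=
  fun p q => M (p.1.1, p.2) (q.1.1, q.2) * (1 : Matrix ι ι R) p.1.2 q.1.2

def lift23 (M : Matrix (ι × ι) (ι × ι) R) : Matrix ((ι × ι) × ι) ((ι × ι) × ι) R :=
  fun p q => (1 : Matrix ι ι R) p.1.1 q.1.1 * M (p.1.2, p.2) (q.1.2, q.2)

lemma lift13_yangR (v : R) : lift13 (yangR ι v) = v • 1 + (swap13 ι).permMatrix R := by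
  ext ⟨⟨a, b⟩, c⟩ ⟨⟨a', b'⟩, c'⟩
  simp only [lift13, yangR, swap13, one_apply, PEquiv.toMatrix_apply, Matrix.add_apply,
    Matrix.smul_apply, smul_eq_mul, Equiv.toPEquiv_apply, Option.mem_def, Option.some.injEq]
  grind

lemma lift23_yangR (v : R) : lift23 (yangR ι v) = v • 1 + (swap23 ι).permMatrix R := by
  ext ⟨⟨a, b⟩, c⟩ ⟨⟨a', b'⟩, c'⟩
  simp only [lift23, yangR, swap23, one_apply, PEquiv.toMatrix_apply, Matrix.add_apply,
    Matrix.smul_apply, smul_eq_mul, Equiv.toPEquiv_apply, Option.mem_def, Option.some.injEq]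
  grind

lemma yangR_kronecker_one (v : R) :
    yangR ι v ⊗ₖ (1 : Matrix ι ι R) = v • 1 + (swap12 ι).permMatrix R := by
  ext ⟨⟨a, b⟩, c⟩ ⟨⟨a', b'⟩, c'⟩
  simp only [yangR, swap12, kroneckerMap_apply, one_apply, PEquiv.toMatrix_apply, Matrix.add_apply,
    Matrix.smul_apply, smul_eq_mul, Equiv.toPEquiv_apply, Option.mem_def, Option.some.injEq,
    Equiv.prodCongr_apply, Equiv.prodComm_apply, Prod.map_apply]
  grind

theorem continuous_yangR [TopologicalSpace R] [IsTopologicalRing R] :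
    Continuous (yangR ι : R → _) := by
  unfold yangR
  fun_prop

variable [Fintype ι]

lemma stack_eq_lift13_mul_lift23 (M N : Matrix (ι × ι) (ι × ι) R) :
    stack M N = lift13 M * lift23 N := by
  ext p q
  simp [stack, lift13, lift23, mul_apply, Fintype.sum_prod_type, one_apply, ite_mul, mul_ite]

lemma stack_submatrix_prodComm (M N : Matrix (ι × ι) (ι × ι) R) :
    (stack M N).submatrix ((Equiv.prodComm ι ι).prodCongr (.refl ι))
      ((Equiv.prodComm ι ι).prodCongr (.refl ι)) = lift23 M * lift13 N := by
  ext p q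
  simp [stack, lift13, lift23, mul_apply, Fintype.sum_prod_type, one_apply, ite_mul, mul_ite]

theorem yangR_yangBaxter (u v : R) :
    yangR ι (u - v) ⊗ₖ (1 : Matrix ι ι R) * (lift13 (yangR ι u) * lift23 (yangR ι v)) =
      lift23 (yangR ι v) * lift13 (yangR ι u) * yangR ι (u - v) ⊗ₖ (1 : Matrix ι ι R) := by
  have braid : swap23 ι * (swap13 ι * swap12 ι) = swap12 ι * (swap13 ι * swap23 ι) := rfl
  -- every product of two distinct transpositions is one of the 3-cycles on the right
  have h₁ : swap23 ι * swap12 ι = swap12 ι * swap13 ι := rfl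
  have h₂ : swap13 ι * swap23 ι = swap12 ι * swap13 ι := rfl
  have h₃ : swap23 ι * swap13 ι = swap13 ι * swap12 ι := rfl
  have h₄ : swap12 ι * swap23 ι = swap13 ι * swap12 ι := rfl
  simp only [yangR_kronecker_one, lift13_yangR, lift23_yangR, mul_add, add_mul, smul_mul_assoc,
    mul_smul_comm, one_mul, mul_one, ← permMatrix_mul, mul_assoc]
  rw [braid, h₁, h₂, h₃, h₄]
  module

theorem isUnit_yangR {w : R} (hw : IsUnit (w ^ 2 - 1)) : IsUnit (yangR ι w) := by
  set P := Equiv.Perm.permMatrix R (Equiv.prodComm ι ι)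
  have hP : P * P = 1 := by
    rw [← permMatrix_mul]
    exact permMatrix_one
  have hprod : yangR ι w * (w • 1 - P) = (w ^ 2 - 1) • 1 := by
    change (w • 1 + P) * (w • 1 - P) = _
    simp only [add_mul, mul_sub, smul_mul_assoc, mul_smul_comm, one_mul, mul_one, hP]
    module
  refine IsUnit.of_mul_eq_one (((hw.unit⁻¹ : Rˣ) : R) • (w • 1 - P)) ?_
  rw [mul_smul_comm, hprod, smul_smul, IsUnit.val_inv_mul, one_smul]

theorem transfer_yangR_commute (L : ℕ) {u v : R} (h : IsUnit ((u - v) ^ 2 - 1)) :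
    Commute (transfer L (yangR ι u)) (transfer L (yangR ι v)) := by
  refine transfer_commute_of_intertwine L (isUnit_yangR h) ?_
  rw [stack_eq_lift13_mul_lift23, stack_submatrix_prodComm]
  exact yangR_yangBaxter u v

end YangR

lemma Rmat_eq_yangR (n : ℕ) (v : ℂ) : Rmat n v = yangR (Fin n) v := by
  ext ⟨a, b⟩ ⟨a', b'⟩
  simp only [Rmat, yangR, one_apply, PEquiv.toMatrix_apply, Matrix.add_apply, Matrix.smul_apply,
    smul_eq_mul, Equiv.toPEquiv_apply, Option.mem_def, Option.some.injEq]
  grind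

lemma transferMatrix_eq_transfer (n L : ℕ) (v : ℂ) :
    transferMatrix n L v = transfer L (yangR (Fin n) v) := by
  rw [← Rmat_eq_yangR]
  rfl

theorem transferMatrix_commute_general (n L : ℕ) (u v : ℂ) :
    transferMatrix n L u * transferMatrix n L v =
      transferMatrix n L v * transferMatrix n L u := by
  have hcont : Continuous (transferMatrix n L) := by
    rw [funext (transferMatrix_eq_transfer n L)]
    exact continuous_transfer L continuous_yangR
  have hdense : Dense ({v + 1, v - 1}ᶜ : Set ℂ) :=
    ((Set.countable_singleton _).insert _).dense_compl ℂ
  have hgeneric : Set.EqOn (fun u => transferMatrix n L u * transferMatrix n L v)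
      (fun u => transferMatrix n L v * transferMatrix n L u) {v + 1, v - 1}ᶜ := by
    intro u hu
    simp only [Set.mem_compl_iff, Set.mem_insert_iff, Set.mem_singleton_iff, not_or] at hu
    have hunit : IsUnit ((u - v) ^ 2 - 1) := by
      rw [isUnit_iff_ne_zero, show (u - v) ^ 2 - 1 = (u - (v + 1)) * (u - (v - 1)) by ring]
      exact mul_ne_zero (sub_ne_zero.2 hu.1) (sub_ne_zero.2 hu.2)
    simp only [transferMatrix_eq_transfer]
    exact (transfer_yangR_commute L hunit).eq
  exact congrFun (Continuous.ext_on hdense (hcont.mul continuous_const)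
    (continuous_const.mul hcont) hgeneric) u

/-- The row-to-row transfer matrices of the rational `su(n)` model commute:
`t(u) t(v) = t(v) t(u)` on `V^{⊗L}` for all spectral parameters `u, v ∈ ℂ`. -/
theorem transferMatrix_commute (n L : ℕ) (hn : 1 ≤ n) (hL : 1 ≤ L) (u v : ℂ) :
    transferMatrix n L u * transferMatrix n L v =
      transferMatrix n L v * transferMatrix n L u :=
  transferMatrix_commute_general n L u v
end

section
/- Rotation of the lattice (Trotter–Suzuki lattice identity): for every L ≥ 1, every even N ≥ 2, every u ∈ ℂ and all weights d₁, …, d_n ∈ ℂ, with D = diag(d₁, …, d_n) acting on V, the partition function can be evaluated in either direction: Tr_{V^{⊗L}} [ D^{⊗L} · (t(u) t̃(u))^{N/2} ] = Tr_{V^{⊗N}} [ (t_QTM(0))^L ]. -/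
open Complex

/-- The rotated R-matrix `R̃(v)^{a₁b₁}_{a₂b₂} = R(v)^{b₁a₂}_{b₂a₁}`. -/
noncomputable def Rtilde (n : ℕ) (v : ℂ) :
    Matrix (Fin n × Fin n) (Fin n × Fin n) ℂ := fun p q =>
  Rmat n v (p.2, q.1) (q.2, p.1)

/-- The auxiliary transfer matrix `t̃(v)`, defined from `R̃` by the same formula. -/
noncomputable def auxTransferMatrix (n L : ℕ) (v : ℂ) :
    Matrix (Fin L → Fin n) (Fin L → Fin n) ℂ := fun α β =>
  ∑ ν : Fin L → Fin n, ∏ j : Fin L, Rtilde n v (ν (cyc j), α j) (ν j, β j)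

/-- Site `2k` (1-based), i.e. the `(2k+1)`-th 0-based position, of the QTM chain
of length `N = 2(M+1)`. -/
def eIdx {M : ℕ} (k : Fin (M + 1)) : Fin (2 * (M + 1)) :=
  ⟨2 * k.1 + 1, by have := k.isLt; omega⟩

/-- Site `2k - 1` (1-based), i.e. the `2k`-th 0-based position. -/
def oIdx {M : ℕ} (k : Fin (M + 1)) : Fin (2 * (M + 1)) :=
  ⟨2 * k.1, by have := k.isLt; omega⟩

/-- The quantum transfer matrix on `V^{⊗N}`, `N = 2(M+1)`, with weights `d`:
`t_QTM(v)^{a}_{b} = Σ_ν d_{ν₁} ∏_{k=1}^{N/2} R(u+iv)^{a_{2k} ν_{2k+1}}_{b_{2k} ν_{2k}}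
R̃(u−iv)^{a_{2k−1} ν_{2k}}_{b_{2k−1} ν_{2k−1}}`, with `ν_{N+1} = ν₁`. -/
noncomputable def qtm (n M : ℕ) (u : ℂ) (d : Fin n → ℂ) (v : ℂ) :
    Matrix (Fin (2 * (M + 1)) → Fin n) (Fin (2 * (M + 1)) → Fin n) ℂ := fun a b =>
  ∑ ν : Fin (2 * (M + 1)) → Fin n,
    d (ν ⟨0, by omega⟩) *
      ∏ k : Fin (M + 1),
        Rmat n (u + I * v) (a (eIdx k), ν (cyc (eIdx k))) (b (eIdx k), ν (eIdx k)) *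
          Rtilde n (u - I * v) (a (oIdx k), ν (eIdx k)) (b (oIdx k), ν (oIdx k))

/-!
Both sides are the partition function of one vertex model on a torus of `N = 2(M+1)` rows and
`L` columns. Expanding the trace of a matrix power as a sum over closed paths writes the left side
as a sum over configurations read row by row, with the vertices of `t` and `t̃` as weights, and
the right side as a sum over configurations read column by column, with the vertices of
`t_QTM(0)` as weights. At `v = 0` these are the same vertices `R(u)` and `R̃(u)`, so turning the
lattice by a quarter is a bijection between the two configuration spaces that matches the
weights vertex by vertex.
-/

open Finset Matrix

namespace Matrix
variable {R ι : Type*} [CommSemiring R] [Fintype ι] [DecidableEq ι]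

theorem pow_succ_apply_eq_sum_paths (B : Matrix ι ι R) (m : ℕ) (a b : ι) :
    (B ^ (m + 1)) a b = ∑ γ : Fin m → ι, ∏ i : Fin (m + 1),
      B ((Fin.cons a γ : Fin (m + 1) → ι) i) ((Fin.snoc γ b : Fin (m + 1) → ι) i) := by
  induction m generalizing b with
  | zero => simp [Fin.snoc]
  | succ m ih =>
    rw [← (Fin.snocEquiv fun _ => ι).sum_comp, Fintype.sum_prod_type, pow_succ, mul_apply]
    refine sum_congr rfl fun c _ => ?_
    simp [ih, sum_mul, Fin.prod_univ_castSucc (n := m + 1), Fin.snocEquiv,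
      Fin.cons_snoc_eq_snoc_cons]

theorem trace_diagonal_mul_pow_eq_sum_cycles (w : ι → R) (B : Matrix ι ι R) (L : ℕ) [NeZero L] :
    trace (diagonal w * B ^ L) = ∑ η : Fin L → ι, w (η 0) * ∏ i, B (η i) (η (i + 1)) := by
  obtain ⟨m, rfl⟩ := Nat.exists_eq_succ_of_ne_zero (NeZero.ne L)
  rw [← (Fin.consEquiv fun _ => ι).sum_comp, Fintype.sum_prod_type]
  simp [trace, pow_succ_apply_eq_sum_paths, mul_sum, Fin.snoc_eq_cons_rotate]

theorem trace_diagonal_mul_pow_eq_sum_of_apply_eq_sum {Z : Type*} [Fintype Z] {B : Matrix ι ι R}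
    {f : ι → ι → Z → R} (hB : ∀ X Y, B X Y = ∑ z, f X Y z) (w : ι → R) (L : ℕ) [NeZero L] :
    trace (diagonal w * B ^ L) =
      ∑ x : (Fin L → ι) × (Fin L → Z), w (x.1 0) * ∏ i, f (x.1 i) (x.1 (i + 1)) (x.2 i) := by
  simp only [trace_diagonal_mul_pow_eq_sum_cycles, hB, Fintype.prod_sum, mul_sum,
    Fintype.sum_prod_type]

theorem trace_pow_eq_sum_of_apply_eq_sum {Z : Type*} [Fintype Z] {B : Matrix ι ι R}
    {f : ι → ι → Z → R} (hB : ∀ X Y, B X Y = ∑ z, f X Y z) (L : ℕ) [NeZero L] :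
    trace (B ^ L) =
      ∑ x : (Fin L → ι) × (Fin L → Z), ∏ i, f (x.1 i) (x.1 (i + 1)) (x.2 i) := by
  simpa using trace_diagonal_mul_pow_eq_sum_of_apply_eq_sum hB 1 L

end Matrix

theorem cyc_eq_add_one {L : ℕ} [NeZero L] (j : Fin L) : cyc j = j + 1 := by
  ext
  simp [cyc, Fin.val_add]

theorem cyc_eIdx {M : ℕ} (k : Fin (M + 1)) : cyc (eIdx k) = oIdx (k + 1) := by
  ext
  simp only [cyc, eIdx, oIdx, Fin.val_add, Fin.val_one', Nat.add_mod_mod, ← Nat.mul_mod_mul_left]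
  ring_nf

theorem oIdx_zero {M : ℕ} : oIdx (0 : Fin (M + 1)) = ⟨0, by omega⟩ := rfl

section Interleave

variable {α : Type*} {M : ℕ}

def interleave (p q : Fin (M + 1) → α) (t : Fin (2 * (M + 1))) : α :=
  if t.1 % 2 = 0 then p ⟨t.1 / 2, by omega⟩ else q ⟨t.1 / 2, by omega⟩

@[simp]
theorem interleave_oIdx (p q : Fin (M + 1) → α) (k : Fin (M + 1)) :
    interleave p q (oIdx k) = p k := by
  simp [interleave, oIdx]

@[simp]
theorem interleave_eIdx (p q : Fin (M + 1) → α) (k : Fin (M + 1)) :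
    interleave p q (eIdx k) = q k := by
  rw [interleave, if_neg (by simp [eIdx, Nat.add_mod])]
  congr
  simp [eIdx]
  omega

@[simp]
theorem interleave_oIdx_eIdx (f : Fin (2 * (M + 1)) → α) :
    interleave (fun k => f (oIdx k)) (fun k => f (eIdx k)) = f := by
  ext t
  unfold interleave
  split_ifs <;> dsimp only <;> congr 1 <;> apply Fin.ext <;> simp [oIdx, eIdx] <;> omega

end Interleave

section Rotation

variable (n L M : ℕ) [NeZero L] (u : ℂ) (d : Fin n → ℂ)

noncomputable def rowStepWeight (X Y : Fin L → Fin n)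
    (z : (Fin L → Fin n) × (Fin L → Fin n) × (Fin L → Fin n)) : ℂ :=
  (∏ j, Rmat n u (z.2.1 (j + 1), X j) (z.2.1 j, z.1 j)) *
    ∏ j, Rtilde n u (z.2.2 (j + 1), z.1 j) (z.2.2 j, Y j)

theorem transferMatrix_mul_auxTransferMatrix_apply (X Y : Fin L → Fin n) :
    (transferMatrix n L u * auxTransferMatrix n L u) X Y = ∑ z, rowStepWeight n L u X Y z := by
  simp only [mul_apply, transferMatrix, auxTransferMatrix, sum_mul_sum, Fintype.sum_prod_type,
    rowStepWeight, cyc_eq_add_one]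

noncomputable def qtmStepWeight (a b ν : Fin (2 * (M + 1)) → Fin n) : ℂ :=
  d (ν (oIdx 0)) *
    ∏ k, Rmat n u (a (eIdx k), ν (oIdx (k + 1))) (b (eIdx k), ν (eIdx k)) *
      Rtilde n u (a (oIdx k), ν (eIdx k)) (b (oIdx k), ν (oIdx k))

theorem qtm_zero_apply (a b : Fin (2 * (M + 1)) → Fin n) :
    qtm n M u d 0 a b = ∑ ν, qtmStepWeight n M u d a b ν := by
  simp only [qtm, qtmStepWeight, mul_zero, add_zero, sub_zero, cyc_eIdx, oIdx_zero]

/- A configuration `(η, c)` read row by row: `η m` is the state entering time step `m`, and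
`c m = (β, ν, ν')` holds the state between `t` and `t̃` and the auxiliary lines of `t` and `t̃`
in that step. Read column by column, `(a, ν)` holds the states and auxiliary lines of `t_QTM`. -/
abbrev RowConfig :=
  (Fin (M + 1) → Fin L → Fin n) ×
    (Fin (M + 1) → (Fin L → Fin n) × (Fin L → Fin n) × (Fin L → Fin n))

abbrev ColumnConfig :=
  (Fin L → Fin (2 * (M + 1)) → Fin n) × (Fin L → Fin (2 * (M + 1)) → Fin n)

/- The quarter turn of the torus; it reverses both lattice directions, hence the negated
indices. -/
def rotateConfig : RowConfig n L M ≃ ColumnConfig n L M where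
  toFun x :=
    (fun j => interleave (fun k => (x.2 (-1 - k)).2.2 (1 - j))
        (fun k => (x.2 (-1 - k)).2.1 (1 - j)),
     fun j => interleave (fun k => x.1 (-k) (-j)) (fun k => (x.2 (-1 - k)).1 (-j)))
  invFun y :=
    (fun m j => y.2 (-j) (oIdx (-m)),
     fun m => (fun j => y.2 (-j) (eIdx (-1 - m)), fun j => y.1 (1 - j) (eIdx (-1 - m)),
       fun j => y.1 (1 - j) (oIdx (-1 - m))))
  left_inv x := by simp
  right_inv y := by simp

theorem prod_rowStepWeight_eq_prod_qtmStepWeight_rotateConfig (x : RowConfig n L M) :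
    (∏ j, d (x.1 0 j)) * ∏ m, rowStepWeight n L u (x.1 m) (x.1 (m + 1)) (x.2 m) =
      ∏ j, qtmStepWeight n M u d ((rotateConfig n L M x).1 j) ((rotateConfig n L M x).1 (j + 1))
        ((rotateConfig n L M x).2 j) := by
  obtain ⟨η, c⟩ := x
  conv_rhs => rw [← Equiv.prod_comp (Equiv.neg (Fin L))]
  simp only [qtmStepWeight, rowStepWeight, rotateConfig, Equiv.coe_fn_mk, interleave_oIdx,
    interleave_eIdx, Equiv.neg_apply]
  have h₁ : ∀ i : Fin L, 1 - -i = i + 1 := fun i => by abel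
  have h₂ : ∀ i : Fin L, 1 - (-i + 1) = i := fun i => by abel
  simp only [neg_zero, neg_neg, h₁, h₂, ← prod_mul_distrib]
  conv_rhs => rw [prod_mul_distrib]
  congr 1
  rw [prod_comm]
  refine prod_congr rfl fun i _ =>
    (Fintype.prod_equiv (Equiv.subLeft (-1 : Fin (M + 1))) _ _ fun k => ?_).symm
  have h₃ : -(k + 1) = -1 - k := by abel
  have h₄ : -k = -1 - k + 1 := by abel
  simp only [Equiv.subLeft_apply, h₃, h₄]

end Rotation

theorem trotter_suzuki_rotation_general (n L M : ℕ) (hL : 1 ≤ L) (u : ℂ)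
    (d : Fin n → ℂ) :
    Matrix.trace
        (Matrix.diagonal (fun α : Fin L → Fin n => ∏ j, d (α j)) *
          (transferMatrix n L u * auxTransferMatrix n L u) ^ (M + 1)) =
      Matrix.trace ((qtm n M u d 0) ^ L) := by
  have : NeZero L := ⟨by omega⟩
  rw [trace_diagonal_mul_pow_eq_sum_of_apply_eq_sum
      (transferMatrix_mul_auxTransferMatrix_apply n L u),
    trace_pow_eq_sum_of_apply_eq_sum (qtm_zero_apply n M u d)]
  exact Fintype.sum_equiv (rotateConfig n L M) _ _
    (prod_rowStepWeight_eq_prod_qtmStepWeight_rotateConfig n L M u d)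

/-- Rotation of the lattice (Trotter–Suzuki lattice identity): for `N = 2(M+1)` even and any
weights `d`, with `D^{⊗L}` the diagonal matrix with entries `∏_j d_{α_j}`:
`Tr_{V^{⊗L}} [ D^{⊗L} (t(u) t̃(u))^{N/2} ] = Tr_{V^{⊗N}} [ t_QTM(0)^L ]`. -/
theorem trotter_suzuki_rotation (n L M : ℕ) (hn : 1 ≤ n) (hL : 1 ≤ L) (u : ℂ)
    (d : Fin n → ℂ) :
    Matrix.trace
        (Matrix.diagonal (fun α : Fin L → Fin n => ∏ j, d (α j)) *
          (transferMatrix n L u * auxTransferMatrix n L u) ^ (M + 1)) =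
      Matrix.trace ((qtm n M u d 0) ^ L) :=
  trotter_suzuki_rotation_general n L M hL u d
end

section
/- The quantum transfer matrices form a commuting family: for every even N ≥ 2, every u ∈ ℂ, all weights d₁, …, d_n ∈ ℂ, and all spectral parameters v, v′ ∈ ℂ, t_QTM(v) t_QTM(v′) = t_QTM(v′) t_QTM(v) as operators on V^{⊗N}. -/
open Complex

set_option linter.unusedSectionVars false
set_option maxHeartbeats 1000000

namespace QtmAux

/-- Kronecker delta. -/
def kd {n : ℕ} (i j : Fin n) : ℂ := if i = j then 1 else 0

lemma kd_comm {n : ℕ} (i j : Fin n) : kd i j = kd j i := by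
  simp [kd, eq_comm]

lemma sum_kd_kd {n : ℕ} (i j : Fin n) : ∑ c : Fin n, kd i c * kd c j = kd i j := by
  simp [kd, ite_mul, Finset.sum_ite_eq]

lemma sum_kd_kd' {n : ℕ} (i j : Fin n) : ∑ c : Fin n, kd c i * kd c j = kd i j := by
  simp [kd, ite_mul, Finset.sum_ite_eq', eq_comm]

lemma Rmat_apply (n : ℕ) (v : ℂ) (p q : Fin n × Fin n) :
    Rmat n v p q = v * kd p.1 q.1 * kd p.2 q.2 + kd p.1 q.2 * kd p.2 q.1 := by
  simp only [Rmat, kd]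
  split <;> split <;> ring

lemma Rtilde_apply (n : ℕ) (v : ℂ) (p q : Fin n × Fin n) :
    Rtilde n v p q = v * kd p.1 q.1 * kd p.2 q.2 + kd p.1 p.2 * kd q.1 q.2 := by
  simp only [Rtilde, Rmat_apply]
  rw [kd_comm p.2 q.2, kd_comm q.1 p.1, kd_comm p.2 p.1]
  ring

/-- Permutation matrix on the doubled auxiliary space. -/
noncomputable def Pswap (n : ℕ) : Matrix (Fin n × Fin n) (Fin n × Fin n) ℂ :=
  fun p q => kd p.1 q.2 * kd p.2 q.1

/-- The intertwiner `S = 1 + c P`. -/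
noncomputable def Sm (n : ℕ) (c : ℂ) : Matrix (Fin n × Fin n) (Fin n × Fin n) ℂ :=
  1 + c • Pswap n

lemma sum_P_mul {n : ℕ} (x : Fin n × Fin n) (f : Fin n × Fin n → ℂ) :
    ∑ r : Fin n × Fin n, Pswap n x r * f r = f (x.2, x.1) := by
  rw [Fintype.sum_prod_type]
  simp [Pswap, kd, ite_mul, Finset.sum_ite_eq, Finset.sum_ite_eq']

lemma sum_mul_P {n : ℕ} (y : Fin n × Fin n) (f : Fin n × Fin n → ℂ) :
    ∑ r : Fin n × Fin n, f r * Pswap n r y = f (y.2, y.1) := by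
  rw [Fintype.sum_prod_type]
  simp [Pswap, kd, mul_ite, Finset.sum_ite_eq, Finset.sum_ite_eq']

lemma Sm_mul_apply {n : ℕ} (c : ℂ) (A : Matrix (Fin n × Fin n) (Fin n × Fin n) ℂ)
    (x y : Fin n × Fin n) : (Sm n c * A) x y = A x y + c * A (x.2, x.1) y := by
  simp only [Sm, Matrix.add_mul, Matrix.add_apply, Matrix.one_mul, Matrix.smul_mul,
    Matrix.smul_apply, smul_eq_mul]
  congr 1
  simp only [Matrix.mul_apply, Matrix.smul_apply, smul_eq_mul]
  rw [sum_P_mul x (fun r => A r y)]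

lemma mul_Sm_apply {n : ℕ} (c : ℂ) (A : Matrix (Fin n × Fin n) (Fin n × Fin n) ℂ)
    (x y : Fin n × Fin n) : (A * Sm n c) x y = A x y + c * A x (y.2, y.1) := by
  simp only [Sm, Matrix.mul_add, Matrix.add_apply, Matrix.mul_one, Matrix.mul_smul,
    Matrix.smul_apply, smul_eq_mul]
  congr 1
  simp only [Matrix.mul_apply, Matrix.smul_apply, smul_eq_mul]
  rw [sum_mul_P y (fun r => A x r)]

end QtmAux


namespace QtmAux

/-- Two-line column weight at an even (1-based) site, with horizontal parameters `p, q`. -/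
noncomputable def We (n : ℕ) (p q : ℂ) (a b : Fin n) :
    Matrix (Fin n × Fin n) (Fin n × Fin n) ℂ := fun x y =>
  ∑ c : Fin n, Rmat n p (a, y.1) (c, x.1) * Rmat n q (c, y.2) (b, x.2)

/-- Two-line column weight at an odd (1-based) site. -/
noncomputable def Wo (n : ℕ) (r s : ℂ) (a b : Fin n) :
    Matrix (Fin n × Fin n) (Fin n × Fin n) ℂ := fun x z =>
  ∑ c : Fin n, Rtilde n r (a, z.1) (c, x.1) * Rtilde n s (c, z.2) (b, x.2)

lemma We_eq (n : ℕ) (p q : ℂ) (a b : Fin n) (x y : Fin n × Fin n) :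
    We n p q a b x y =
      p * q * kd y.1 x.1 * kd y.2 x.2 * kd a b + p * kd y.1 x.1 * kd a x.2 * kd y.2 b +
        q * kd a x.1 * kd y.1 b * kd y.2 x.2 + kd a x.1 * kd y.1 x.2 * kd y.2 b := by
  have h : ∀ c : Fin n,
      Rmat n p (a, y.1) (c, x.1) * Rmat n q (c, y.2) (b, x.2) =
        p * q * kd y.1 x.1 * kd y.2 x.2 * (kd a c * kd c b) +
          p * kd y.1 x.1 * kd y.2 b * (kd a c * kd c x.2) +
          q * kd a x.1 * kd y.2 x.2 * (kd y.1 c * kd c b) +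
          kd a x.1 * kd y.2 b * (kd y.1 c * kd c x.2) := by
    intro c
    simp only [Rmat_apply]
    ring
  simp only [We, h, Finset.sum_add_distrib, ← Finset.mul_sum, sum_kd_kd]
  ring

lemma Wo_eq (n : ℕ) (r s : ℂ) (a b : Fin n) (x z : Fin n × Fin n) :
    Wo n r s a b x z =
      r * s * kd z.1 x.1 * kd z.2 x.2 * kd a b + r * kd z.1 x.1 * kd b x.2 * kd a z.2 +
        s * kd a z.1 * kd z.2 x.2 * kd b x.1 + kd a z.1 * kd z.2 x.1 * kd b x.2 := by
  have h : ∀ c : Fin n,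
      Rtilde n r (a, z.1) (c, x.1) * Rtilde n s (c, z.2) (b, x.2) =
        r * s * kd z.1 x.1 * kd z.2 x.2 * (kd a c * kd c b) +
          r * kd z.1 x.1 * kd b x.2 * (kd a c * kd c z.2) +
          s * kd a z.1 * kd z.2 x.2 * (kd c x.1 * kd c b) +
          kd a z.1 * kd b x.2 * (kd c x.1 * kd c z.2) := by
    intro c
    simp only [Rtilde_apply]
    ring
  simp only [Wo, h, Finset.sum_add_distrib, ← Finset.mul_sum, sum_kd_kd, sum_kd_kd']
  rw [kd_comm x.1 b, kd_comm x.1 z.2]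
  ring

/-- Local intertwining relation at even sites. -/
lemma Sm_mul_We (n : ℕ) (p q : ℂ) (a b : Fin n) :
    Sm n (q - p) * We n p q a b = We n q p a b * Sm n (q - p) := by
  ext x y
  rw [Sm_mul_apply, mul_Sm_apply]
  simp only [We_eq]
  ring

/-- Local intertwining relation at odd sites. -/
lemma Sm_mul_Wo (n : ℕ) (r s : ℂ) (a b : Fin n) :
    Sm n (r - s) * Wo n r s a b = Wo n s r a b * Sm n (r - s) := by
  ext x y
  rw [Sm_mul_apply, mul_Sm_apply]
  simp only [Wo_eq]
  ring

lemma Sm_mul_Sm (n : ℕ) (c : ℂ) : Sm n c * Sm n (-c) = (1 - c ^ 2) • 1 := by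
  ext ⟨x1, x2⟩ ⟨y1, y2⟩
  rw [mul_Sm_apply]
  simp only [Sm, Matrix.add_apply, Matrix.smul_apply, Matrix.one_apply, Pswap, smul_eq_mul,
    kd, Prod.mk.injEq, Prod.ext_iff]
  by_cases h1 : x1 = y1 <;> by_cases h2 : x2 = y2 <;> by_cases h3 : x1 = y2 <;>
    by_cases h4 : x2 = y1 <;> simp_all <;> ring
end QtmAux

namespace QtmAux

lemma cyc_castSucc {L : ℕ} (j : Fin L) : cyc (Fin.castSucc j) = Fin.succ j := by
  have := j.isLt
  simp only [cyc, Fin.castSucc, Fin.succ, Fin.castAdd, Fin.castLE]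
  exact Fin.ext (Nat.mod_eq_of_lt (by omega))

lemma cyc_last {L : ℕ} : cyc (Fin.last L) = 0 := by
  simp [cyc, Fin.last, Fin.ext_iff]

variable {I : Type*} [Fintype I] [DecidableEq I]

lemma sum_pi_succ {L : ℕ} (g : (Fin (L + 1) → I) → ℂ) :
    ∑ y : Fin (L + 1) → I, g y = ∑ p : I × (Fin L → I), g (Fin.cons p.1 p.2) := by
  rw [← Equiv.sum_comp (Fin.consEquiv (fun _ : Fin (L + 1) => I)) g]
  rfl

lemma sum_pi_snoc {L : ℕ} (g : (Fin (L + 1) → I) → ℂ) :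
    ∑ y : Fin (L + 1) → I, g y = ∑ p : I × (Fin L → I), g (Fin.snoc p.2 p.1) := by
  rw [← Equiv.sum_comp (Fin.snocEquiv (fun _ : Fin (L + 1) => I)) g]
  rfl

lemma cons_last {L : ℕ} (s : I) (y : Fin (L + 1) → I) :
    (Fin.cons s y : Fin (L + 2) → I) (Fin.last (L + 1)) = y (Fin.last L) := by
  rw [← Fin.succ_last, Fin.cons_succ]

lemma cons_castSucc_succ {L : ℕ} (s : I) (y : Fin (L + 1) → I) (k : Fin L) :
    (Fin.cons s y : Fin (L + 2) → I) (Fin.castSucc (Fin.succ k)) = y (Fin.castSucc k) := by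
  rw [← Fin.succ_castSucc, Fin.cons_succ]

lemma chain : ∀ (L : ℕ) (A : Fin L → Matrix I I ℂ) (s : I) (f : I → ℂ),
    (∑ y : Fin L → I,
      (∏ k : Fin L, A k ((Fin.cons s y : Fin (L + 1) → I) (Fin.castSucc k)) (y k)) *
        f ((Fin.cons s y : Fin (L + 1) → I) (Fin.last L)))
      = ∑ t : I, (List.ofFn A).prod s t * f t := by
  intro L
  induction L with
  | zero =>
    intro A s f
    simp [Matrix.one_apply]
  | succ L ih =>
    intro A s f
    rw [sum_pi_succ (fun y => (∏ k : Fin (L + 1),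
      A k ((Fin.cons s y : Fin (L + 2) → I) (Fin.castSucc k)) (y k)) *
        f ((Fin.cons s y : Fin (L + 2) → I) (Fin.last (L + 1)))), Fintype.sum_prod_type]
    have step : ∀ (y0 : I) (y' : Fin L → I),
        (∏ k : Fin (L + 1),
            A k ((Fin.cons s (Fin.cons y0 y') : Fin (L + 2) → I) (Fin.castSucc k))
              ((Fin.cons y0 y' : Fin (L + 1) → I) k)) *
          f ((Fin.cons s (Fin.cons y0 y') : Fin (L + 2) → I) (Fin.last (L + 1)))
        = A 0 s y0 * ((∏ k : Fin L,
            (fun j : Fin L => A (Fin.succ j)) k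
              ((Fin.cons y0 y' : Fin (L + 1) → I) (Fin.castSucc k)) (y' k)) *
          f ((Fin.cons y0 y' : Fin (L + 1) → I) (Fin.last L))) := by
      intro y0 y'
      rw [Fin.prod_univ_succ, cons_last]
      simp only [cons_castSucc_succ, Fin.castSucc_zero, Fin.cons_zero, Fin.cons_succ]
      ring
    calc (∑ y0 : I, ∑ y' : Fin L → I,
          (∏ k : Fin (L + 1),
            A k ((Fin.cons s (Fin.cons y0 y') : Fin (L + 2) → I) (Fin.castSucc k))
              ((Fin.cons y0 y' : Fin (L + 1) → I) k)) *
          f ((Fin.cons s (Fin.cons y0 y') : Fin (L + 2) → I) (Fin.last (L + 1))))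
        = ∑ y0 : I, A 0 s y0 * ∑ t : I,
            (List.ofFn (fun j : Fin L => A (Fin.succ j))).prod y0 t * f t := by
          apply Finset.sum_congr rfl
          intro y0 _
          rw [← ih (fun j : Fin L => A (Fin.succ j)) y0 f, Finset.mul_sum]
          exact Finset.sum_congr rfl fun y' _ => step y0 y'
      _ = ∑ t : I, (List.ofFn A).prod s t * f t := by
          simp only [Finset.mul_sum]
          rw [Finset.sum_comm]
          apply Finset.sum_congr rfl
          intro t _
          rw [List.ofFn_succ, List.prod_cons, Matrix.mul_apply, Finset.sum_mul]
          apply Finset.sum_congr rfl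
          intro y0 _
          ring

lemma cons_snoc_castSucc {L : ℕ} (s : I) (z : Fin L → I) (m : Fin (L + 1)) :
    (Fin.cons s (Fin.snoc z s : Fin (L + 1) → I) : Fin (L + 2) → I) (Fin.castSucc m)
      = (Fin.cons s z : Fin (L + 1) → I) m := by
  induction m using Fin.cases with
  | zero => simp
  | succ j => rw [cons_castSucc_succ, Fin.snoc_castSucc, Fin.cons_succ]

lemma snoc_eq_cons_cyc {L : ℕ} (s : I) (z : Fin L → I) (k : Fin (L + 1)) :
    (Fin.snoc z s : Fin (L + 1) → I) k = (Fin.cons s z : Fin (L + 1) → I) (cyc k) := by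
  induction k using Fin.lastCases with
  | last => rw [cyc_last]; simp
  | cast j => rw [cyc_castSucc, Fin.snoc_castSucc, Fin.cons_succ]

lemma cyclic (L : ℕ) (A : Fin (L + 1) → Matrix I I ℂ) (D : I → ℂ) :
    (∑ x : Fin (L + 1) → I, D (x 0) * ∏ k : Fin (L + 1), A k (x k) (x (cyc k)))
      = Matrix.trace (Matrix.diagonal D * (List.ofFn A).prod) := by
  rw [sum_pi_succ (fun x => D (x 0) * ∏ k : Fin (L + 1), A k (x k) (x (cyc k))),
    Fintype.sum_prod_type]
  have step : ∀ (s : I) (z : Fin L → I),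
      D ((Fin.cons s z : Fin (L + 1) → I) 0) *
          ∏ k : Fin (L + 1), A k ((Fin.cons s z : Fin (L + 1) → I) k)
            ((Fin.cons s z : Fin (L + 1) → I) (cyc k))
        = (∏ k : Fin (L + 1),
            A k ((Fin.cons s (Fin.snoc z s : Fin (L + 1) → I) : Fin (L + 2) → I) (Fin.castSucc k))
              ((Fin.snoc z s : Fin (L + 1) → I) k)) * D s := by
    intro s z
    rw [Fin.cons_zero, mul_comm]
    congr 1
    apply Finset.prod_congr rfl
    intro k _
    rw [cons_snoc_castSucc, snoc_eq_cons_cyc]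
  calc (∑ s : I, ∑ z : Fin L → I,
        D ((Fin.cons s z : Fin (L + 1) → I) 0) *
          ∏ k : Fin (L + 1), A k ((Fin.cons s z : Fin (L + 1) → I) k)
            ((Fin.cons s z : Fin (L + 1) → I) (cyc k)))
      = ∑ s : I, ∑ y : Fin (L + 1) → I,
          (∏ k : Fin (L + 1),
            A k ((Fin.cons s y : Fin (L + 2) → I) (Fin.castSucc k)) (y k)) *
            (if y (Fin.last L) = s then D s else 0) := by
        apply Finset.sum_congr rfl
        intro s _
        rw [sum_pi_snoc (fun y => (∏ k : Fin (L + 1),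
          A k ((Fin.cons s y : Fin (L + 2) → I) (Fin.castSucc k)) (y k)) *
            (if y (Fin.last L) = s then D s else 0)), Fintype.sum_prod_type]
        rw [Finset.sum_comm]
        have collapse : ∀ z : Fin L → I, ∀ t : I,
            (∏ k : Fin (L + 1),
              A k ((Fin.cons s (Fin.snoc z t : Fin (L + 1) → I) : Fin (L + 2) → I)
                (Fin.castSucc k)) ((Fin.snoc z t : Fin (L + 1) → I) k)) *
              (if (Fin.snoc z t : Fin (L + 1) → I) (Fin.last L) = s then D s else 0)
            = if t = s then (∏ k : Fin (L + 1),
              A k ((Fin.cons s (Fin.snoc z t : Fin (L + 1) → I) : Fin (L + 2) → I)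
                (Fin.castSucc k)) ((Fin.snoc z t : Fin (L + 1) → I) k)) * D s else 0 := by
          intro z t
          rw [Fin.snoc_last]
          split <;> simp
        apply Finset.sum_congr rfl
        intro z _
        rw [Finset.sum_congr rfl fun t _ => collapse z t, Finset.sum_ite_eq' Finset.univ s
          (fun t => (∏ k : Fin (L + 1),
            A k ((Fin.cons s (Fin.snoc z t : Fin (L + 1) → I) : Fin (L + 2) → I)
              (Fin.castSucc k)) ((Fin.snoc z t : Fin (L + 1) → I) k)) * D s)]
        simp only [Finset.mem_univ, if_true]
        exact step s z
    _ = ∑ s : I, ∑ t : I, (List.ofFn A).prod s t * (if t = s then D s else 0) := by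
        apply Finset.sum_congr rfl
        intro s _
        have := chain (L + 1) A s (fun t => if t = s then D s else 0)
        rw [← this]
        apply Finset.sum_congr rfl
        intro y _
        rw [cons_last]
    _ = Matrix.trace (Matrix.diagonal D * (List.ofFn A).prod) := by
        rw [Matrix.trace]
        apply Finset.sum_congr rfl
        intro s _
        simp [Matrix.diag, Matrix.diagonal_mul, mul_ite, mul_comm]

end QtmAux

namespace QtmAux

variable {I : Type*} [Fintype I] [DecidableEq I]

lemma prod_intertwine (S : Matrix I I ℂ) :
    ∀ (L : ℕ) (W W' : Fin L → Matrix I I ℂ), (∀ k, S * W k = W' k * S) →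
      S * (List.ofFn W).prod = (List.ofFn W').prod * S := by
  intro L
  induction L with
  | zero => intro W W' h; simp
  | succ L ih =>
    intro W W' h
    rw [List.ofFn_succ, List.ofFn_succ, List.prod_cons, List.prod_cons]
    calc S * (W 0 * (List.ofFn fun k : Fin L => W k.succ).prod)
        = (S * W 0) * (List.ofFn fun k : Fin L => W k.succ).prod := by rw [mul_assoc]
      _ = (W' 0 * S) * (List.ofFn fun k : Fin L => W k.succ).prod := by rw [h 0]
      _ = W' 0 * (S * (List.ofFn fun k : Fin L => W k.succ).prod) := by rw [mul_assoc]
      _ = W' 0 * ((List.ofFn fun k : Fin L => W' k.succ).prod * S) := by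
          rw [ih (fun k => W k.succ) (fun k => W' k.succ) (fun k => h k.succ)]
      _ = W' 0 * (List.ofFn fun k : Fin L => W' k.succ).prod * S := by rw [mul_assoc]

lemma trace_intertwine (S Sb D : Matrix I I ℂ) (e : ℂ) (he : e ≠ 0)
    (h1 : Sb * S = e • 1) (h2 : S * Sb = e • 1) (hD : S * D = D * S)
    (L : ℕ) (W W' : Fin L → Matrix I I ℂ) (h : ∀ k, S * W k = W' k * S) :
    Matrix.trace (D * (List.ofFn W).prod) = Matrix.trace (D * (List.ofFn W').prod) := by
  have hP := prod_intertwine S L W W' h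
  apply mul_left_cancel₀ he
  calc e * Matrix.trace (D * (List.ofFn W).prod)
      = Matrix.trace (D * (List.ofFn W).prod * (Sb * S)) := by
        rw [h1]; rw [Matrix.mul_smul, Matrix.mul_one, Matrix.trace_smul]; rfl
    _ = Matrix.trace ((D * (List.ofFn W).prod * Sb) * S) := by simp only [mul_assoc]
    _ = Matrix.trace (S * (D * (List.ofFn W).prod * Sb)) := Matrix.trace_mul_comm _ _
    _ = Matrix.trace (D * (List.ofFn W').prod * (S * Sb)) := by
        rw [show S * (D * (List.ofFn W).prod * Sb) = (S * D) * (List.ofFn W).prod * Sb by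
          simp only [mul_assoc], hD,
          show D * S * (List.ofFn W).prod * Sb = D * (S * (List.ofFn W).prod) * Sb by
          simp only [mul_assoc], hP,
          show D * ((List.ofFn W').prod * S) * Sb = D * (List.ofFn W').prod * (S * Sb) by
          simp only [mul_assoc]]
    _ = e * Matrix.trace (D * (List.ofFn W').prod) := by
        rw [h2, Matrix.mul_smul, Matrix.mul_one, Matrix.trace_smul]; rfl

end QtmAux

namespace QtmAux
lemma cyc_eIdx {M : ℕ} (k : Fin (M + 1)) : cyc (eIdx k) = oIdx (cyc k) := by
  have hk := k.isLt
  apply Fin.ext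
  show (2 * k.1 + 1 + 1) % (2 * (M + 1)) = 2 * ((k.1 + 1) % (M + 1))
  by_cases h : k.1 + 1 < M + 1
  · rw [Nat.mod_eq_of_lt (by omega), Nat.mod_eq_of_lt h]
    omega
  · have h1 : k.1 + 1 = M + 1 := by omega
    have h2 : 2 * k.1 + 1 + 1 = 2 * (M + 1) := by omega
    rw [h1, h2, Nat.mod_self, Nat.mod_self]

lemma oIdx_zero {M : ℕ} : (oIdx (0 : Fin (M + 1))) = ⟨0, by omega⟩ := by
  apply Fin.ext
  show 2 * (0 : Fin (M + 1)).1 = 0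
  simp

variable {α : Type*}

/-- Interleave two `(M+1)`-tuples into a `2(M+1)`-tuple (odd-even split). -/
def interleave {M : ℕ} (g h : Fin (M + 1) → α) : Fin (2 * (M + 1)) → α :=
  fun j => if j.1 % 2 = 0 then g ⟨j.1 / 2, by have := j.isLt; omega⟩
    else h ⟨j.1 / 2, by have := j.isLt; omega⟩

lemma interleave_oIdx {M : ℕ} (g h : Fin (M + 1) → α) (k : Fin (M + 1)) :
    interleave g h (oIdx k) = g k := by
  have : (oIdx k).1 % 2 = 0 := by simp [oIdx, Nat.mul_mod_right]
  simp only [interleave, this, if_true]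
  congr 1
  exact Fin.ext (by show 2 * k.1 / 2 = k.1; omega)

lemma interleave_eIdx {M : ℕ} (g h : Fin (M + 1) → α) (k : Fin (M + 1)) :
    interleave g h (eIdx k) = h k := by
  have h2 : ¬((eIdx k).1 % 2 = 0) := by show ¬((2 * k.1 + 1) % 2 = 0); omega
  simp only [interleave, h2, if_false]
  congr 1
  exact Fin.ext (by show (2 * k.1 + 1) / 2 = k.1; omega)

lemma interleave_section {M : ℕ} (f : Fin (2 * (M + 1)) → α) :
    interleave (fun k => f (oIdx k)) (fun k => f (eIdx k)) = f := by
  funext j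
  have hj := j.isLt
  by_cases h : j.1 % 2 = 0
  · simp only [interleave, h, if_true]
    congr 1
    exact Fin.ext (by show 2 * (j.1 / 2) = j.1; omega)
  · simp only [interleave, h, if_false]
    congr 1
    exact Fin.ext (by show 2 * (j.1 / 2) + 1 = j.1; omega)

/-- The repacking equivalence between three quantum-chain index tuples and the
doubled-auxiliary path data. -/
def pathEquiv (n M : ℕ) :
    ((Fin (2 * (M + 1)) → Fin n) × (Fin (2 * (M + 1)) → Fin n) × (Fin (2 * (M + 1)) → Fin n)) ≃
      ((Fin (M + 1) → Fin n × Fin n) × (Fin (M + 1) → (Fin n × Fin n) × Fin n × Fin n)) where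
  toFun t := (fun k => (t.2.1 (oIdx k), t.2.2 (oIdx k)),
    fun k => ((t.2.1 (eIdx k), t.2.2 (eIdx k)), t.1 (oIdx k), t.1 (eIdx k)))
  invFun w := (interleave (fun k => (w.2 k).2.1) (fun k => (w.2 k).2.2),
    interleave (fun k => (w.1 k).1) (fun k => (w.2 k).1.1),
    interleave (fun k => (w.1 k).2) (fun k => (w.2 k).1.2))
  left_inv t := by
    obtain ⟨c, ν, μ⟩ := t
    refine Prod.ext ?_ (Prod.ext ?_ ?_)
    · exact interleave_section c
    · exact interleave_section ν
    · exact interleave_section μ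
  right_inv w := by
    obtain ⟨x, tf⟩ := w
    simp only [interleave_oIdx, interleave_eIdx]


variable {n M : ℕ}

/-- The per-column summand seen from the quantum side. -/
noncomputable def BIGf (n M : ℕ) (p q r s : ℂ) (a b : Fin (2 * (M + 1)) → Fin n)
    (c ν μ : Fin (2 * (M + 1)) → Fin n) (k : Fin (M + 1)) : ℂ :=
  (Rtilde n r (a (oIdx k), ν (eIdx k)) (c (oIdx k), ν (oIdx k)) *
      Rtilde n s (c (oIdx k), μ (eIdx k)) (b (oIdx k), μ (oIdx k))) *
    (Rmat n p (a (eIdx k), ν (cyc (eIdx k))) (c (eIdx k), ν (eIdx k)) *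
      Rmat n q (c (eIdx k), μ (cyc (eIdx k))) (b (eIdx k), μ (eIdx k)))

/-- The per-column summand seen from the auxiliary-path side. -/
noncomputable def Hf (n M : ℕ) (p q r s : ℂ) (a b : Fin (2 * (M + 1)) → Fin n)
    (x : Fin (M + 1) → Fin n × Fin n)
    (tf : Fin (M + 1) → (Fin n × Fin n) × Fin n × Fin n) (k : Fin (M + 1)) : ℂ :=
  (Rtilde n r (a (oIdx k), (tf k).1.1) ((tf k).2.1, (x k).1) *
      Rtilde n s ((tf k).2.1, (tf k).1.2) (b (oIdx k), (x k).2)) *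
    (Rmat n p (a (eIdx k), (x (cyc k)).1) ((tf k).2.2, (tf k).1.1) *
      Rmat n q ((tf k).2.2, (x (cyc k)).2) (b (eIdx k), (tf k).1.2))

lemma hcol (p q r s : ℂ) (a b : Fin (2 * (M + 1)) → Fin n)
    (x : Fin (M + 1) → Fin n × Fin n) (k : Fin (M + 1)) :
    (Wo n r s (a (oIdx k)) (b (oIdx k)) * We n p q (a (eIdx k)) (b (eIdx k)))
        (x k) (x (cyc k))
      = ∑ t : (Fin n × Fin n) × Fin n × Fin n,
          (Rtilde n r (a (oIdx k), t.1.1) (t.2.1, (x k).1) *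
              Rtilde n s (t.2.1, t.1.2) (b (oIdx k), (x k).2)) *
            (Rmat n p (a (eIdx k), (x (cyc k)).1) (t.2.2, t.1.1) *
              Rmat n q (t.2.2, (x (cyc k)).2) (b (eIdx k), t.1.2)) := by
  rw [Matrix.mul_apply]
  simp only [Fintype.sum_prod_type]
  apply Finset.sum_congr rfl
  intro z1 _
  apply Finset.sum_congr rfl
  intro z2 _
  rw [show (Wo n r s (a (oIdx k)) (b (oIdx k))) (x k) (z1, z2)
      = ∑ co : Fin n, Rtilde n r (a (oIdx k), z1) (co, (x k).1) *
          Rtilde n s (co, z2) (b (oIdx k), (x k).2) from rfl,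
    show (We n p q (a (eIdx k)) (b (eIdx k))) (z1, z2) (x (cyc k))
      = ∑ ce : Fin n, Rmat n p (a (eIdx k), (x (cyc k)).1) (ce, z1) *
          Rmat n q (ce, (x (cyc k)).2) (b (eIdx k), z2) from rfl,
    Finset.sum_mul_sum]

lemma qtm_mul_apply (u : ℂ) (d : Fin n → ℂ) (v v' : ℂ)
    (a b : Fin (2 * (M + 1)) → Fin n) :
    (qtm n M u d v * qtm n M u d v') a b =
      ∑ x : Fin (M + 1) → Fin n × Fin n,
        (d (x 0).1 * d (x 0).2) *
          ∏ k : Fin (M + 1),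
            (Wo n (u - I * v) (u - I * v') (a (oIdx k)) (b (oIdx k)) *
              We n (u + I * v) (u + I * v') (a (eIdx k)) (b (eIdx k))) (x k) (x (cyc k)) := by
  classical
  set p := u + I * v
  set q := u + I * v'
  set r := u - I * v
  set s := u - I * v'
  have h1 : (qtm n M u d v * qtm n M u d v') a b
      = ∑ trip : (Fin (2 * (M + 1)) → Fin n) × (Fin (2 * (M + 1)) → Fin n) ×
          (Fin (2 * (M + 1)) → Fin n),
          (d (trip.2.1 ⟨0, by omega⟩) * d (trip.2.2 ⟨0, by omega⟩)) *
            ∏ k : Fin (M + 1), BIGf n M p q r s a b trip.1 trip.2.1 trip.2.2 k := by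
    rw [Matrix.mul_apply]
    simp only [Fintype.sum_prod_type]
    apply Finset.sum_congr rfl
    intro c _
    rw [show qtm n M u d v a c = ∑ ν : Fin (2 * (M + 1)) → Fin n, d (ν ⟨0, by omega⟩) *
        ∏ k : Fin (M + 1),
          Rmat n p (a (eIdx k), ν (cyc (eIdx k))) (c (eIdx k), ν (eIdx k)) *
            Rtilde n r (a (oIdx k), ν (eIdx k)) (c (oIdx k), ν (oIdx k)) from rfl,
      show qtm n M u d v' c b = ∑ μ : Fin (2 * (M + 1)) → Fin n, d (μ ⟨0, by omega⟩) *
        ∏ k : Fin (M + 1),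
          Rmat n q (c (eIdx k), μ (cyc (eIdx k))) (b (eIdx k), μ (eIdx k)) *
            Rtilde n s (c (oIdx k), μ (eIdx k)) (b (oIdx k), μ (oIdx k)) from rfl,
      Finset.sum_mul_sum]
    apply Finset.sum_congr rfl
    intro ν _
    apply Finset.sum_congr rfl
    intro μ _
    rw [mul_mul_mul_comm, ← Finset.prod_mul_distrib]
    congr 1
    apply Finset.prod_congr rfl
    intro k _
    rw [BIGf]
    ring
  have h2 : ∀ trip : (Fin (2 * (M + 1)) → Fin n) × (Fin (2 * (M + 1)) → Fin n) ×
      (Fin (2 * (M + 1)) → Fin n),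
      (d (trip.2.1 ⟨0, by omega⟩) * d (trip.2.2 ⟨0, by omega⟩)) *
          ∏ k : Fin (M + 1), BIGf n M p q r s a b trip.1 trip.2.1 trip.2.2 k
        = (d (((pathEquiv n M trip).1 0).1) * d (((pathEquiv n M trip).1 0).2)) *
          ∏ k : Fin (M + 1), Hf n M p q r s a b (pathEquiv n M trip).1
            (pathEquiv n M trip).2 k := by
    intro ⟨c, ν, μ⟩
    show (d (ν ⟨0, by omega⟩) * d (μ ⟨0, by omega⟩)) * _
      = (d (ν (oIdx 0)) * d (μ (oIdx 0))) * _
    rw [oIdx_zero]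
    congr 1
    apply Finset.prod_congr rfl
    intro k _
    show BIGf n M p q r s a b c ν μ k
      = (Rtilde n r (a (oIdx k), ν (eIdx k)) (c (oIdx k), ν (oIdx k)) *
          Rtilde n s (c (oIdx k), μ (eIdx k)) (b (oIdx k), μ (oIdx k))) *
        (Rmat n p (a (eIdx k), ν (oIdx (cyc k))) (c (eIdx k), ν (eIdx k)) *
          Rmat n q (c (eIdx k), μ (oIdx (cyc k))) (b (eIdx k), μ (eIdx k)))
    rw [BIGf, cyc_eIdx]
  rw [h1, Finset.sum_congr rfl (fun trip _ => h2 trip)]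
  trans (∑ w : (Fin (M + 1) → Fin n × Fin n) ×
      (Fin (M + 1) → (Fin n × Fin n) × Fin n × Fin n),
    (d ((w.1 0).1) * d ((w.1 0).2)) * ∏ k : Fin (M + 1), Hf n M p q r s a b w.1 w.2 k)
  · exact Equiv.sum_comp (pathEquiv n M)
      (fun w => (d ((w.1 0).1) * d ((w.1 0).2)) *
        ∏ k : Fin (M + 1), Hf n M p q r s a b w.1 w.2 k)
  rw [Fintype.sum_prod_type]
  apply Finset.sum_congr rfl
  intro x _
  dsimp only
  rw [← Finset.mul_sum]
  congr 1
  simp only [Hf]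
  rw [← Fintype.prod_sum (fun (k : Fin (M + 1)) (t : (Fin n × Fin n) × Fin n × Fin n) =>
    (Rtilde n r (a (oIdx k), t.1.1) (t.2.1, (x k).1) *
        Rtilde n s (t.2.1, t.1.2) (b (oIdx k), (x k).2)) *
      (Rmat n p (a (eIdx k), (x (cyc k)).1) (t.2.2, t.1.1) *
        Rmat n q (t.2.2, (x (cyc k)).2) (b (eIdx k), t.1.2)))]
  apply Finset.prod_congr rfl
  intro k _
  exact (hcol p q r s a b x k).symm

end QtmAux


namespace QtmAux

lemma Sm_mul_diag (n : ℕ) (c : ℂ) (d : Fin n → ℂ) :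
    Sm n c * Matrix.diagonal (fun st : Fin n × Fin n => d st.1 * d st.2) =
      Matrix.diagonal (fun st : Fin n × Fin n => d st.1 * d st.2) * Sm n c := by
  ext x y
  rw [Matrix.mul_diagonal, Matrix.diagonal_mul]
  simp only [Sm, Matrix.add_apply, Matrix.one_apply, Matrix.smul_apply, Pswap, smul_eq_mul, kd]
  by_cases h1 : x = y <;> by_cases h2 : x.1 = y.2 <;> by_cases h3 : x.2 = y.1 <;>
    simp_all <;> ring

/-- Commutation of the quantum transfer matrices at generic spectral parameters. -/
lemma qtm_comm_aux (n M : ℕ) (u : ℂ) (d : Fin n → ℂ) (v v' : ℂ)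
    (h : (I * (v' - v)) ^ 2 ≠ 1) :
    qtm n M u d v * qtm n M u d v' = qtm n M u d v' * qtm n M u d v := by
  ext a b
  rw [qtm_mul_apply u d v v' a b, qtm_mul_apply u d v' v a b]
  rw [cyclic M (fun k => Wo n (u - I * v) (u - I * v') (a (oIdx k)) (b (oIdx k)) *
        We n (u + I * v) (u + I * v') (a (eIdx k)) (b (eIdx k)))
      (fun st : Fin n × Fin n => d st.1 * d st.2),
    cyclic M (fun k => Wo n (u - I * v') (u - I * v) (a (oIdx k)) (b (oIdx k)) *
        We n (u + I * v') (u + I * v) (a (eIdx k)) (b (eIdx k)))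
      (fun st : Fin n × Fin n => d st.1 * d st.2)]
  set c : ℂ := I * (v' - v) with hc
  have hqp : (u + I * v') - (u + I * v) = c := by rw [hc]; ring
  have hrs : (u - I * v) - (u - I * v') = c := by rw [hc]; ring
  apply trace_intertwine (Sm n c) (Sm n (-c)) _ (1 - c ^ 2)
    (by intro hzero; exact h (by linear_combination -hzero))
  · rw [show Sm n (-c) * Sm n c = Sm n (-c) * Sm n (-(-c)) by rw [neg_neg], Sm_mul_Sm]
    rw [neg_pow, show ((-1 : ℂ)) ^ 2 = 1 by norm_num, one_mul]
  · exact Sm_mul_Sm n c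
  · exact Sm_mul_diag n c d
  · intro k
    calc Sm n c * (Wo n (u - I * v) (u - I * v') (a (oIdx k)) (b (oIdx k)) *
          We n (u + I * v) (u + I * v') (a (eIdx k)) (b (eIdx k)))
        = (Sm n c * Wo n (u - I * v) (u - I * v') (a (oIdx k)) (b (oIdx k))) *
            We n (u + I * v) (u + I * v') (a (eIdx k)) (b (eIdx k)) := by
          rw [mul_assoc]
      _ = (Wo n (u - I * v') (u - I * v) (a (oIdx k)) (b (oIdx k)) * Sm n c) *
            We n (u + I * v) (u + I * v') (a (eIdx k)) (b (eIdx k)) := by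
          rw [← hrs, Sm_mul_Wo]
      _ = Wo n (u - I * v') (u - I * v) (a (oIdx k)) (b (oIdx k)) *
            (Sm n c * We n (u + I * v) (u + I * v') (a (eIdx k)) (b (eIdx k))) := by
          rw [mul_assoc]
      _ = Wo n (u - I * v') (u - I * v) (a (oIdx k)) (b (oIdx k)) *
            (We n (u + I * v') (u + I * v) (a (eIdx k)) (b (eIdx k)) * Sm n c) := by
          rw [← hqp, Sm_mul_We]
      _ = Wo n (u - I * v') (u - I * v) (a (oIdx k)) (b (oIdx k)) *
            We n (u + I * v') (u + I * v) (a (eIdx k)) (b (eIdx k)) * Sm n c := by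
          rw [mul_assoc]

/-- Polynomial (in the spectral parameter) version of a `qtm` matrix entry. -/
noncomputable def qtmP (n M : ℕ) (u : ℂ) (d : Fin n → ℂ)
    (a b : Fin (2 * (M + 1)) → Fin n) : Polynomial ℂ :=
  ∑ ν : Fin (2 * (M + 1)) → Fin n,
    Polynomial.C (d (ν ⟨0, by omega⟩)) *
      ∏ k : Fin (M + 1),
        ((Polynomial.C u + Polynomial.C I * Polynomial.X) *
            Polynomial.C (kd (a (eIdx k)) (b (eIdx k)) * kd (ν (cyc (eIdx k))) (ν (eIdx k))) +
          Polynomial.C (kd (a (eIdx k)) (ν (eIdx k)) * kd (ν (cyc (eIdx k))) (b (eIdx k)))) *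
        ((Polynomial.C u - Polynomial.C I * Polynomial.X) *
            Polynomial.C (kd (a (oIdx k)) (b (oIdx k)) * kd (ν (eIdx k)) (ν (oIdx k))) +
          Polynomial.C (kd (a (oIdx k)) (ν (eIdx k)) * kd (b (oIdx k)) (ν (oIdx k))))

lemma qtmP_eval (n M : ℕ) (u : ℂ) (d : Fin n → ℂ) (a b : Fin (2 * (M + 1)) → Fin n)
    (v : ℂ) : (qtmP n M u d a b).eval v = qtm n M u d v a b := by
  rw [qtmP, show qtm n M u d v a b = ∑ ν : Fin (2 * (M + 1)) → Fin n,
    d (ν ⟨0, by omega⟩) *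
      ∏ k : Fin (M + 1),
        Rmat n (u + I * v) (a (eIdx k), ν (cyc (eIdx k))) (b (eIdx k), ν (eIdx k)) *
          Rtilde n (u - I * v) (a (oIdx k), ν (eIdx k)) (b (oIdx k), ν (oIdx k)) from rfl]
  rw [Polynomial.eval_finset_sum]
  apply Finset.sum_congr rfl
  intro ν _
  rw [Polynomial.eval_mul, Polynomial.eval_C, Polynomial.eval_prod]
  congr 1
  apply Finset.prod_congr rfl
  intro k _
  rw [Rmat_apply, Rtilde_apply]
  simp only [Polynomial.eval_mul, Polynomial.eval_add, Polynomial.eval_sub, Polynomial.eval_C,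
    Polynomial.eval_X]
  ring

end QtmAux

/-- The quantum transfer matrices form a commuting family:
`t_QTM(v) t_QTM(v′) = t_QTM(v′) t_QTM(v)` on `V^{⊗N}`, `N = 2(M+1)` even, for all
spectral parameters `v, v′ ∈ ℂ`. -/
theorem qtm_commute (n M : ℕ) (hn : 1 ≤ n) (u : ℂ) (d : Fin n → ℂ) (v v' : ℂ) :
    qtm n M u d v * qtm n M u d v' = qtm n M u d v' * qtm n M u d v := by
  classical
  ext a b
  set g : Polynomial ℂ :=
    (∑ cf : Fin (2 * (M + 1)) → Fin n,
        QtmAux.qtmP n M u d a cf * Polynomial.C (qtm n M u d v' cf b)) -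
      (∑ cf : Fin (2 * (M + 1)) → Fin n,
        Polynomial.C (qtm n M u d v' a cf) * QtmAux.qtmP n M u d cf b) with hg
  have heval : ∀ w : ℂ, g.eval w =
      (qtm n M u d w * qtm n M u d v') a b - (qtm n M u d v' * qtm n M u d w) a b := by
    intro w
    rw [hg]
    simp only [Polynomial.eval_sub, Polynomial.eval_finset_sum, Polynomial.eval_mul,
      Polynomial.eval_C, QtmAux.qtmP_eval]
    rw [Matrix.mul_apply, Matrix.mul_apply]
  have hroot : ∀ w : ℂ, (I * (v' - w)) ^ 2 ≠ 1 → g.IsRoot w := by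
    intro w hw
    rw [Polynomial.IsRoot, heval w, QtmAux.qtm_comm_aux n M u d w v' hw, sub_self]
  have hginf : ({w : ℂ | g.IsRoot w}).Infinite := by
    have hfin : ({v' + I, v' - I} : Set ℂ).Finite := Set.toFinite _
    apply Set.Infinite.mono ?_ hfin.infinite_compl
    intro w hw
    apply hroot
    intro hcontra
    apply hw
    have h2 : (w - (v' + I)) * (w - (v' - I)) = 0 := by
      linear_combination (-1 : ℂ) * hcontra + ((w - v') ^ 2 - 1) * Complex.I_sq
    rcases mul_eq_zero.mp h2 with h3 | h3
    · left; exact sub_eq_zero.mp h3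
    · right; exact sub_eq_zero.mp h3
  have hg0 : g = 0 := Polynomial.eq_zero_of_infinite_isRoot g hginf
  have hv := heval v
  rw [hg0, Polynomial.eval_zero] at hv
  exact (sub_eq_zero.mp hv.symm)
end

section
/- Identify ℂ⁶ with W = ℂ² ⊗ ℂ³. On W ⊗ W define T·T′ = Σ_α (T^α ⊗ 1) ⊗ (T^α ⊗ 1), where T^α are the spin-1/2 operators on ℂ², and S·S′ = Σ_α (1 ⊗ S^α) ⊗ (1 ⊗ S^α), where S^α are the spin-1 operators on ℂ³. Then T·T′ and S·S′ commute, and the permutation operator P_W on W ⊗ W satisfies P_W = ( (1/2)·id + 2 T·T′ ) ( −id + S·S′ + (S·S′)² ). Hence the leg interaction of the integrable mixed spin-(1/2,1) ladder is the su(6) permutation operator. -/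
open Complex
open scoped Kronecker

/-- The Pauli matrices. -/
noncomputable def pauli : Fin 3 → Matrix (Fin 2) (Fin 2) ℂ :=
  ![!![0, 1; 1, 0], !![0, -I; I, 0], !![1, 0; 0, -1]]

/-- The spin-1/2 operators `T^α = σ^α/2` (`α = x, y, z`). -/
noncomputable def spinHalf : Fin 3 → Matrix (Fin 2) (Fin 2) ℂ :=
  fun α => (1 / 2 : ℂ) • pauli α

/-- The spin-1 operators on `ℂ³`. -/
noncomputable def spinOne : Fin 3 → Matrix (Fin 3) (Fin 3) ℂ :=
  ![(1 / (Real.sqrt 2 : ℂ)) • !![0, 1, 0; 1, 0, 1; 0, 1, 0],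
    (1 / (Real.sqrt 2 : ℂ)) • !![0, -I, 0; I, 0, -I; 0, I, 0],
    !![1, 0, 0; 0, 0, 0; 0, 0, -1]]

/-- The permutation operator on `W ⊗ W`, `W = ℂ² ⊗ ℂ³` (`P_W(x ⊗ y) = y ⊗ x`). -/
noncomputable def permW6 :
    Matrix ((Fin 2 × Fin 3) × (Fin 2 × Fin 3)) ((Fin 2 × Fin 3) × (Fin 2 × Fin 3)) ℂ :=
  fun r c => if r.1 = c.2 ∧ r.2 = c.1 then 1 else 0

/-- `T·T′ = Σ_α (T^α ⊗ 1) ⊗ (T^α ⊗ 1)` on `W ⊗ W`, `W = ℂ² ⊗ ℂ³`. -/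
noncomputable def TTop6 :
    Matrix ((Fin 2 × Fin 3) × (Fin 2 × Fin 3)) ((Fin 2 × Fin 3) × (Fin 2 × Fin 3)) ℂ :=
  ∑ α : Fin 3,
    (spinHalf α ⊗ₖ (1 : Matrix (Fin 3) (Fin 3) ℂ)) ⊗ₖ
      (spinHalf α ⊗ₖ (1 : Matrix (Fin 3) (Fin 3) ℂ))

/-- `S·S′ = Σ_α (1 ⊗ S^α) ⊗ (1 ⊗ S^α)` on `W ⊗ W`, `W = ℂ² ⊗ ℂ³`. -/
noncomputable def SSop6 :
    Matrix ((Fin 2 × Fin 3) × (Fin 2 × Fin 3)) ((Fin 2 × Fin 3) × (Fin 2 × Fin 3)) ℂ :=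
  ∑ α : Fin 3,
    ((1 : Matrix (Fin 2) (Fin 2) ℂ) ⊗ₖ spinOne α) ⊗ₖ
      ((1 : Matrix (Fin 2) (Fin 2) ℂ) ⊗ₖ spinOne α)

/-! ### Auxiliary material -/

/-- The middle-swap equivalence `(2×3)×(2×3) ≃ (2×2)×(3×3)`. -/
def midSwap : ((Fin 2 × Fin 3) × (Fin 2 × Fin 3)) ≃ ((Fin 2 × Fin 2) × (Fin 3 × Fin 3)) where
  toFun x := ((x.1.1, x.2.1), (x.1.2, x.2.2))
  invFun x := ((x.1.1, x.2.1), (x.1.2, x.2.2))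
  left_inv _ := rfl
  right_inv _ := rfl

lemma kron_swap (A C : Matrix (Fin 2) (Fin 2) ℂ) (B D : Matrix (Fin 3) (Fin 3) ℂ) :
    (A ⊗ₖ B) ⊗ₖ (C ⊗ₖ D) = ((A ⊗ₖ C) ⊗ₖ (B ⊗ₖ D)).submatrix midSwap midSwap := by
  ext ⟨⟨a,b⟩,⟨c,d⟩⟩ ⟨⟨a',b'⟩,⟨c',d'⟩⟩
  simp only [Matrix.kroneckerMap_apply, Matrix.submatrix_apply, midSwap, Equiv.coe_fn_mk]
  ring

/-- `T·T` summed over `α`, as a `4×4` matrix. -/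
noncomputable def X4 : Matrix (Fin 2 × Fin 2) (Fin 2 × Fin 2) ℂ :=
  ∑ α : Fin 3, spinHalf α ⊗ₖ spinHalf α

/-- `S·S` summed over `α`, as a `9×9` matrix. -/
noncomputable def Y9 : Matrix (Fin 3 × Fin 3) (Fin 3 × Fin 3) ℂ :=
  ∑ α : Fin 3, spinOne α ⊗ₖ spinOne α

/-- The permutation matrix on `ℂ² ⊗ ℂ²`. -/
noncomputable def P2 : Matrix (Fin 2 × Fin 2) (Fin 2 × Fin 2) ℂ :=
  fun r c => if r.1 = c.2 ∧ r.2 = c.1 then 1 else 0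

/-- The permutation matrix on `ℂ³ ⊗ ℂ³`. -/
noncomputable def P3 : Matrix (Fin 3 × Fin 3) (Fin 3 × Fin 3) ℂ :=
  fun r c => if r.1 = c.2 ∧ r.2 = c.1 then 1 else 0

lemma hs2 : (1 / (Real.sqrt 2 : ℂ)) * (1 / (Real.sqrt 2 : ℂ)) = 1 / 2 := by
  rw [div_mul_div_comm, one_mul, ← Complex.ofReal_mul, Real.mul_self_sqrt (by norm_num)]
  norm_num

lemma sum_kron_right (f : Fin 3 → Matrix (Fin 2 × Fin 2) (Fin 2 × Fin 2) ℂ)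
    (B : Matrix (Fin 3 × Fin 3) (Fin 3 × Fin 3) ℂ) :
    (∑ α : Fin 3, f α) ⊗ₖ B = ∑ α : Fin 3, f α ⊗ₖ B := by
  ext ⟨i,j⟩ ⟨k,l⟩
  simp [Matrix.sum_apply, Matrix.kroneckerMap_apply, Finset.sum_mul]

lemma sum_kron_left (A : Matrix (Fin 2 × Fin 2) (Fin 2 × Fin 2) ℂ)
    (f : Fin 3 → Matrix (Fin 3 × Fin 3) (Fin 3 × Fin 3) ℂ) :
    A ⊗ₖ (∑ α : Fin 3, f α) = ∑ α : Fin 3, A ⊗ₖ f α := by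
  ext ⟨i,j⟩ ⟨k,l⟩
  simp [Matrix.sum_apply, Matrix.kroneckerMap_apply, Finset.mul_sum]

lemma submatrix_sum (f : Fin 3 →
    Matrix ((Fin 2 × Fin 2) × (Fin 3 × Fin 3)) ((Fin 2 × Fin 2) × (Fin 3 × Fin 3)) ℂ) :
    (∑ α : Fin 3, f α).submatrix midSwap midSwap
      = ∑ α : Fin 3, (f α).submatrix midSwap midSwap := by
  ext i j
  simp [Matrix.sum_apply]

lemma hT : TTop6 = (X4 ⊗ₖ (1 : Matrix (Fin 3 × Fin 3) (Fin 3 × Fin 3) ℂ)).submatrix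
    midSwap midSwap := by
  rw [TTop6, X4, sum_kron_right, submatrix_sum]
  refine Finset.sum_congr rfl fun α _ => ?_
  rw [kron_swap, Matrix.one_kronecker_one]

lemma hS : SSop6 = ((1 : Matrix (Fin 2 × Fin 2) (Fin 2 × Fin 2) ℂ) ⊗ₖ Y9).submatrix
    midSwap midSwap := by
  rw [SSop6, Y9, sum_kron_left, submatrix_sum]
  refine Finset.sum_congr rfl fun α _ => ?_
  rw [kron_swap, Matrix.one_kronecker_one]

lemma hA : (1 / 2 : ℂ) • (1 : Matrix (Fin 2 × Fin 2) (Fin 2 × Fin 2) ℂ) + (2 : ℂ) • X4 = P2 := by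
  ext ⟨i,j⟩ ⟨k,l⟩
  fin_cases i <;> fin_cases j <;> fin_cases k <;> fin_cases l <;>
    simp [X4, spinHalf, pauli, Fin.sum_univ_three, P2, Matrix.one_apply, Prod.ext_iff,
      Complex.I_mul_I, Matrix.vecHead, Matrix.vecTail] <;>
    ring_nf <;> simp [Complex.I_sq] <;> ring

lemma hY9 : Y9 = (1 / 2 : ℂ) •
      ((!![0, 1, 0; 1, 0, 1; 0, 1, 0] : Matrix (Fin 3) (Fin 3) ℂ) ⊗ₖ !![0, 1, 0; 1, 0, 1; 0, 1, 0]
      + (!![0, -I, 0; I, 0, -I; 0, I, 0] : Matrix (Fin 3) (Fin 3) ℂ) ⊗ₖ !![0, -I, 0; I, 0, -I; 0, I, 0])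
    + (!![1, 0, 0; 0, 0, 0; 0, 0, -1] : Matrix (Fin 3) (Fin 3) ℂ) ⊗ₖ !![1, 0, 0; 0, 0, 0; 0, 0, -1] := by
  rw [Y9, Fin.sum_univ_three]
  show (spinOne 0 ⊗ₖ spinOne 0) + (spinOne 1 ⊗ₖ spinOne 1) + (spinOne 2 ⊗ₖ spinOne 2) = _
  simp only [spinOne, Matrix.cons_val_zero, Matrix.cons_val_one, Matrix.head_cons,
    Matrix.cons_val_two, Matrix.tail_cons, Matrix.smul_kronecker, Matrix.kronecker_smul,
    smul_smul, hs2, smul_add]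

set_option maxHeartbeats 1000000 in
lemma hB : Y9 + Y9 * Y9 = P3 + 1 := by
  rw [hY9]
  simp only [add_mul, mul_add, Matrix.smul_mul, Matrix.mul_smul, smul_smul,
    ← Matrix.mul_kronecker_mul, Matrix.mul_fin_three]
  norm_num
  ext ⟨i,j⟩ ⟨k,l⟩
  fin_cases i <;> fin_cases j <;> fin_cases k <;> fin_cases l <;>
    norm_num [Matrix.kroneckerMap_apply, P3, Matrix.one_apply, Prod.ext_iff, Fin.ext_iff, Complex.I_mul_I,
      Matrix.vecHead, Matrix.vecTail]

lemma hP : permW6 = (P2 ⊗ₖ P3).submatrix midSwap midSwap := by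
  ext ⟨⟨a,b⟩,⟨c,d⟩⟩ ⟨⟨a',b'⟩,⟨c',d'⟩⟩
  simp only [permW6, P2, P3, midSwap, Matrix.submatrix_apply, Matrix.kroneckerMap_apply,
    Equiv.coe_fn_mk, ite_zero_mul_ite_zero, one_mul, Prod.ext_iff]
  exact if_congr (by tauto) rfl rfl

/-- `T·T′` and `S·S′` commute, and the su(6) permutation operator on `W ⊗ W`,
`W = ℂ² ⊗ ℂ³ ≅ ℂ⁶`, equals `((1/2) + 2 T·T′)(−1 + S·S′ + (S·S′)²)`; hence the leg
interaction of the integrable mixed spin-(1/2,1) ladder is the su(6) permutation operator. -/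
theorem su6_leg_permutation :
    Commute TTop6 SSop6 ∧
      permW6 =
        ((1 / 2 : ℂ) • (1 : Matrix ((Fin 2 × Fin 3) × (Fin 2 × Fin 3))
            ((Fin 2 × Fin 3) × (Fin 2 × Fin 3)) ℂ) + (2 : ℂ) • TTop6) *
          (-(1 : Matrix ((Fin 2 × Fin 3) × (Fin 2 × Fin 3))
            ((Fin 2 × Fin 3) × (Fin 2 × Fin 3)) ℂ) + SSop6 + SSop6 ^ 2) := by
  have e1 : (1 : Matrix ((Fin 2 × Fin 3) × (Fin 2 × Fin 3))
      ((Fin 2 × Fin 3) × (Fin 2 × Fin 3)) ℂ)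
      = ((1 : Matrix (Fin 2 × Fin 2) (Fin 2 × Fin 2) ℂ) ⊗ₖ
        (1 : Matrix (Fin 3 × Fin 3) (Fin 3 × Fin 3) ℂ)).submatrix midSwap midSwap := by
    rw [Matrix.one_kronecker_one, Matrix.submatrix_one_equiv]
  constructor
  · show TTop6 * SSop6 = SSop6 * TTop6
    rw [hT, hS, Matrix.submatrix_mul_equiv, Matrix.submatrix_mul_equiv,
      ← Matrix.mul_kronecker_mul, ← Matrix.mul_kronecker_mul, Matrix.one_mul, Matrix.mul_one,
      Matrix.one_mul, Matrix.mul_one]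
  · have f1 : (1 / 2 : ℂ) • (1 : Matrix ((Fin 2 × Fin 3) × (Fin 2 × Fin 3))
        ((Fin 2 × Fin 3) × (Fin 2 × Fin 3)) ℂ) + (2 : ℂ) • TTop6
        = (P2 ⊗ₖ (1 : Matrix (Fin 3 × Fin 3) (Fin 3 × Fin 3) ℂ)).submatrix midSwap midSwap := by
      rw [hT, ← hA]
      ext ⟨⟨a,b⟩,⟨c,d⟩⟩ ⟨⟨a',b'⟩,⟨c',d'⟩⟩
      have h1e := congrFun (congrFun e1 ((a,b),(c,d))) ((a',b'),(c',d'))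
      simp only [Matrix.submatrix_apply, Matrix.kroneckerMap_apply, Matrix.add_apply,
        Matrix.smul_apply, midSwap, Equiv.coe_fn_mk, smul_eq_mul] at h1e ⊢
      linear_combination (1/2 : ℂ) * h1e
    have f2 : -(1 : Matrix ((Fin 2 × Fin 3) × (Fin 2 × Fin 3))
        ((Fin 2 × Fin 3) × (Fin 2 × Fin 3)) ℂ) + SSop6 + SSop6 ^ 2
        = ((1 : Matrix (Fin 2 × Fin 2) (Fin 2 × Fin 2) ℂ) ⊗ₖ P3).submatrix midSwap midSwap := by
      have hsq : SSop6 ^ 2 = ((1 : Matrix (Fin 2 × Fin 2) (Fin 2 × Fin 2) ℂ)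
          ⊗ₖ (Y9 * Y9)).submatrix midSwap midSwap := by
        rw [pow_two, hS, Matrix.submatrix_mul_equiv, ← Matrix.mul_kronecker_mul, Matrix.one_mul]
      rw [hsq, hS]
      ext ⟨⟨a,b⟩,⟨c,d⟩⟩ ⟨⟨a',b'⟩,⟨c',d'⟩⟩
      have hb : Y9 (b,d) (b',d') + (Y9 * Y9) (b,d) (b',d')
          = P3 (b,d) (b',d') + (1 : Matrix (Fin 3 × Fin 3) (Fin 3 × Fin 3) ℂ) (b,d) (b',d') := by
        have := congrFun (congrFun hB (b,d)) (b',d')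
        simpa using this
      have h1e := congrFun (congrFun e1 ((a,b),(c,d))) ((a',b'),(c',d'))
      simp only [Matrix.submatrix_apply, Matrix.kroneckerMap_apply, Matrix.add_apply,
        Matrix.neg_apply, midSwap, Equiv.coe_fn_mk] at h1e ⊢
      linear_combination (1 : Matrix (Fin 2 × Fin 2) (Fin 2 × Fin 2) ℂ) (a,c) (a',c') * hb - h1e
    rw [f1, f2, Matrix.submatrix_mul_equiv, ← Matrix.mul_kronecker_mul, Matrix.one_mul,
      Matrix.mul_one, hP]
end
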